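/- arXiv:2501.18454 — 7 statements merged into one kernel-verified Lean document; each statement's English description precedes it below -/
import Mathlib

section
/- Let C be a nonempty compact convex subset of a real Hilbert space H, let x ∈ H, let λ > 0, and let v ∈ C be a minimizer of c ↦ ⟨c, x⟩ over C. Then ⟨proj_C(-λx), x⟩ - min_{c ∈ C} ⟨c, x⟩ ≤ λ⁻¹ · ‖proj_C(-λx)‖ · (‖v‖ - ‖proj_C(-λx)‖). -/
open RealInnerProductSpace

theorem gap_bound
    {H : Type*} [NormedAddCommGroup H] [InnerProductSpace ℝ H]
    (C : Set H) (hC : C.Nonempty) (hCcomp : IsCompact C) (hCconv : Convex ℝ C)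
    (x : H) (lam : ℝ) (hlam : 0 < lam)
    (v : H) (hvC : v ∈ C) (hv : ∀ c ∈ C, ⟪v, x⟫ ≤ ⟪c, x⟫)
    (p : H) (hpC : p ∈ C)
    (hproj : ∀ c ∈ C, ⟪(-(lam • x)) - p, c - p⟫ ≤ 0) :
    ⟪p, x⟫ - ⟪v, x⟫ ≤ lam⁻¹ * ‖p‖ * (‖v‖ - ‖p‖) := by
  have h1 := hproj v hvC
  have h2 : ⟪p, v⟫ ≤ ‖p‖ * ‖v‖ := real_inner_le_norm p v
  have h3 : ⟪p, p⟫ = ‖p‖ ^ 2 := real_inner_self_eq_norm_sq p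
  simp only [inner_sub_left, inner_sub_right, inner_neg_left,
    real_inner_smul_left] at h1
  rw [real_inner_comm v x, real_inner_comm p x] at h1
  have : lam * (⟪p, x⟫ - ⟪v, x⟫) ≤ ‖p‖ * ‖v‖ - ‖p‖ ^ 2 := by nlinarith
  rw [inv_mul_eq_div, div_mul_eq_mul_div, le_div_iff₀ hlam]
  nlinarith
end

section
/- Let C be a nonempty compact convex subset of a real Hilbert space H, let x ∈ H, and let λ > 0. If v ∈ C minimizes c ↦ ⟨c, x⟩ over C, then ‖proj_C(-λx)‖ ≤ ‖v‖; that is, the projection of -λx onto C has norm no larger than that of any linear minimizer. -/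
open RealInnerProductSpace

theorem proj_norm_le_lmo_norm
    {H : Type*} [NormedAddCommGroup H] [InnerProductSpace ℝ H]
    (C : Set H) (hC : C.Nonempty) (hCcomp : IsCompact C) (hCconv : Convex ℝ C)
    (x : H) (lam : ℝ) (hlam : 0 < lam)
    (v : H) (hvC : v ∈ C) (hv : ∀ c ∈ C, ⟪v, x⟫ ≤ ⟪c, x⟫)
    (p : H) (hpC : p ∈ C)
    (hproj : ∀ c ∈ C, ⟪(-(lam • x)) - p, c - p⟫ ≤ 0) :
    ‖p‖ ≤ ‖v‖ := by
  have h1 := hproj v hvC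
  have hx : ⟪x, v - p⟫ ≤ 0 := by
    rw [inner_sub_right]
    have h2 := hv p hpC
    linarith [real_inner_comm x v, real_inner_comm x p]
  have hexp : ⟪(-(lam • x)) - p, v - p⟫ =
      -(lam * ⟪x, v - p⟫) - ⟪p, v - p⟫ := by
    rw [inner_sub_left, inner_neg_left, real_inner_smul_left]
  rw [hexp] at h1
  have hpv : (0:ℝ) ≤ ⟪p, v - p⟫ := by nlinarith [mul_nonneg hlam.le (neg_nonneg.mpr hx)]
  rw [inner_sub_right, real_inner_self_eq_norm_sq] at hpv
  have hcs : ⟪p, v⟫ ≤ ‖p‖ * ‖v‖ := real_inner_le_norm p v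
  rcases eq_or_lt_of_le (norm_nonneg p) with h0 | h0
  · rw [← h0]; exact norm_nonneg v
  · nlinarith
end

section
/- Let C be a nonempty compact convex subset of a real Hilbert space H with diameter δ_C = sup_{(c₁,c₂) ∈ C×C} ‖c₁ - c₂‖ and bound μ_C = sup_{c ∈ C} ‖c‖. Let x ∈ H and ε > 0. If λ ≥ min{δ_C μ_C, μ_C²}/ε, then 0 ≤ ⟨proj_C(-λx), x⟩ - min_{c ∈ C} ⟨c, x⟩ ≤ ε; in other words, proj_C(-λx) is an ε-approximate linear minimization oracle point for x over C. -/
open RealInnerProductSpace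

theorem eps_approximate_lmo
    {H : Type*} [NormedAddCommGroup H] [InnerProductSpace ℝ H]
    (C : Set H) (hC : C.Nonempty) (hCcomp : IsCompact C) (hCconv : Convex ℝ C)
    (x : H) (ε : ℝ) (hε : 0 < ε)
    (μ : ℝ) (hμ : μ = sSup ((fun c => ‖c‖) '' C))
    (lam : ℝ) (hlam : 0 < lam)
    (hlamge : lam ≥ min (Metric.diam C * μ) (μ ^ 2) / ε)
    (v : H) (hvC : v ∈ C) (hv : ∀ c ∈ C, ⟪v, x⟫ ≤ ⟪c, x⟫)
    (p : H) (hpC : p ∈ C)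
    (hproj : ∀ c ∈ C, ⟪(-(lam • x)) - p, c - p⟫ ≤ 0) :
    0 ≤ ⟪p, x⟫ - ⟪v, x⟫ ∧ ⟪p, x⟫ - ⟪v, x⟫ ≤ ε := by
  constructor
  · linarith [hv p hpC]
  · have hbdd : BddAbove ((fun c => ‖c‖) '' C) := (hCcomp.image continuous_norm).bddAbove
    have hpμ : ‖p‖ ≤ μ := hμ ▸ le_csSup hbdd ⟨p, hpC, rfl⟩
    have hvμ : ‖v‖ ≤ μ := hμ ▸ le_csSup hbdd ⟨v, hvC, rfl⟩
    have hμ0 : 0 ≤ μ := le_trans (norm_nonneg p) hpμ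
    have hdiam : ‖v - p‖ ≤ Metric.diam C := by
      rw [← dist_eq_norm]
      exact Metric.dist_le_diam_of_mem hCcomp.isBounded hvC hpC
    have hkey := hproj v hvC
    have hexp : ⟪(-(lam • x)) - p, v - p⟫ = -(lam * (⟪v,x⟫ - ⟪p,x⟫)) - ⟪p, v - p⟫ := by
      simp [inner_sub_left, inner_sub_right, real_inner_smul_left,
        real_inner_comm x v, real_inner_comm x p]
      ring
    rw [hexp] at hkey
    have hB1 : ⟪p, v - p⟫ ≤ μ * Metric.diam C := by
      calc ⟪p, v - p⟫ ≤ ‖p‖ * ‖v - p‖ := real_inner_le_norm p (v - p)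
        _ ≤ μ * Metric.diam C :=
          mul_le_mul hpμ hdiam (norm_nonneg _) hμ0
    have hB2 : ⟪p, v - p⟫ ≤ μ ^ 2 := by
      have h1 : ⟪p, v⟫ ≤ μ ^ 2 := by
        calc ⟪p, v⟫ ≤ ‖p‖ * ‖v‖ := real_inner_le_norm p v
          _ ≤ μ * μ := mul_le_mul hpμ hvμ (norm_nonneg _) hμ0
          _ = μ ^ 2 := (sq μ).symm
      have h2 : (0:ℝ) ≤ ⟪p, p⟫ := real_inner_self_nonneg
      rw [inner_sub_right]; linarith
    have hmin : min (Metric.diam C * μ) (μ ^ 2) ≤ lam * ε := by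
      rw [ge_iff_le, div_le_iff₀ hε] at hlamge
      linarith
    have hBle : ⟪p, v - p⟫ ≤ lam * ε := by
      rcases le_or_gt (Metric.diam C * μ) (μ ^ 2) with h | h
      · calc ⟪p, v - p⟫ ≤ μ * Metric.diam C := hB1
          _ = Metric.diam C * μ := mul_comm _ _
          _ ≤ lam * ε := by rw [min_eq_left h] at hmin; exact hmin
      · calc ⟪p, v - p⟫ ≤ μ ^ 2 := hB2
          _ ≤ lam * ε := by rw [min_eq_right h.le] at hmin; exact hmin
    nlinarith [hkey, hBle]
end

section
/- Let C be a nonempty compact convex subset of a real Hilbert space H, let x ∈ H, and let λ > 0. Then ⟨proj_C(-λx), x⟩ - min_{c ∈ C} ⟨c, x⟩ ≤ λ⁻¹ · μ_C · ‖v - proj_C(-λx)‖ ≤ λ⁻¹ · δ_C · μ_C, where v is any minimizer of c ↦ ⟨c, x⟩ over C, μ_C = sup_{c∈C} ‖c‖, and δ_C is the diameter of C. -/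
open RealInnerProductSpace

theorem gap_bound_diam
    {H : Type*} [NormedAddCommGroup H] [InnerProductSpace ℝ H]
    (C : Set H) (hC : C.Nonempty) (hCcomp : IsCompact C) (hCconv : Convex ℝ C)
    (x : H) (lam : ℝ) (hlam : 0 < lam)
    (μ : ℝ) (hμ : μ = sSup ((fun c => ‖c‖) '' C))
    (v : H) (hvC : v ∈ C) (hv : ∀ c ∈ C, ⟪v, x⟫ ≤ ⟪c, x⟫)
    (p : H) (hpC : p ∈ C)
    (hproj : ∀ c ∈ C, ⟪(-(lam • x)) - p, c - p⟫ ≤ 0) :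
    ⟪p, x⟫ - ⟪v, x⟫ ≤ lam⁻¹ * μ * ‖v - p‖ ∧
      lam⁻¹ * μ * ‖v - p‖ ≤ lam⁻¹ * Metric.diam C * μ := by
  have hbdd : BddAbove ((fun c => ‖c‖) '' C) :=
    (hCcomp.image continuous_norm).bddAbove
  have hpμ : ‖p‖ ≤ μ := hμ ▸ le_csSup hbdd ⟨p, hpC, rfl⟩
  have hμ0 : 0 ≤ μ := le_trans (norm_nonneg p) hpμ
  -- key inequality from projection with c = v
  have hkey := hproj v hvC
  have h1 : lam * (⟪p, x⟫ - ⟪v, x⟫) ≤ ⟪p, v - p⟫ := by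
    have : ⟪-(lam • x) - p, v - p⟫ = -(lam * (⟪x, v⟫ - ⟪x, p⟫)) - ⟪p, v - p⟫ := by
      rw [inner_sub_left, inner_neg_left, inner_smul_left, inner_sub_right, inner_sub_right]
      simp [starRingEnd_apply]
    rw [this] at hkey
    have hxv : ⟪x, v⟫ = ⟪v, x⟫ := real_inner_comm _ _
    have hxp : ⟪x, p⟫ = ⟪p, x⟫ := real_inner_comm _ _
    nlinarith [hkey]
  have h2 : ⟪p, v - p⟫ ≤ μ * ‖v - p‖ := by
    calc ⟪p, v - p⟫ ≤ ‖p‖ * ‖v - p‖ := real_inner_le_norm _ _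
      _ ≤ μ * ‖v - p‖ := by
          exact mul_le_mul_of_nonneg_right hpμ (norm_nonneg _)
  constructor
  · have h3 : lam * (⟪p, x⟫ - ⟪v, x⟫) ≤ μ * ‖v - p‖ := h1.trans h2
    have h4 : ⟪p, x⟫ - ⟪v, x⟫ ≤ μ * ‖v - p‖ / lam := by
      rw [le_div_iff₀ hlam]; linarith
    have heq : μ * ‖v - p‖ / lam = lam⁻¹ * μ * ‖v - p‖ := by
      field_simp
    linarith [heq ▸ h4]
  · have hd : ‖v - p‖ ≤ Metric.diam C := by
      rw [← dist_eq_norm]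
      exact Metric.dist_le_diam_of_mem hCcomp.isBounded hvC hpC
    have : μ * ‖v - p‖ ≤ Metric.diam C * μ := by
      nlinarith [Metric.diam_nonneg (s := C)]
    calc lam⁻¹ * μ * ‖v - p‖ = lam⁻¹ * (μ * ‖v - p‖) := by ring
      _ ≤ lam⁻¹ * (Metric.diam C * μ) := by
          exact mul_le_mul_of_nonneg_left this (inv_nonneg.mpr hlam.le)
      _ = lam⁻¹ * Metric.diam C * μ := by ring
end

section
/- Let C be a nonempty compact convex subset of a real Hilbert space H and let x ∈ H. Then lim_{λ → ∞} (⟨proj_C(-λx), x⟩ - min_{c ∈ C} ⟨c, x⟩) = 0; i.e., the suboptimality gap of proj_C(-λx) as a linear minimizer tends to zero as λ → ∞. -/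
open RealInnerProductSpace

theorem gap_tendsto_zero
    {H : Type*} [NormedAddCommGroup H] [InnerProductSpace ℝ H]
    (C : Set H) (hC : C.Nonempty) (hCcomp : IsCompact C) (hCconv : Convex ℝ C)
    (x : H)
    (p : ℝ → H)
    (hp : ∀ lam : ℝ, 0 < lam → p lam ∈ C ∧
      ∀ c ∈ C, ⟪(-(lam • x)) - p lam, c - p lam⟫ ≤ 0)
    (v : H) (hvC : v ∈ C) (hv : ∀ c ∈ C, ⟪v, x⟫ ≤ ⟪c, x⟫) :
    Filter.Tendsto (fun lam => ⟪p lam, x⟫ - ⟪v, x⟫) Filter.atTop (nhds 0) := by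
  obtain ⟨M, hM⟩ := hCcomp.isBounded.subset_ball 0
  have hMle : ∀ c ∈ C, ‖c‖ ≤ M := by
    intro c hc
    have := hM hc
    simp [Metric.ball, dist_eq_norm] at this
    exact this.le
  have key : ∀ lam : ℝ, 0 < lam →
      0 ≤ ⟪p lam, x⟫ - ⟪v, x⟫ ∧ ⟪p lam, x⟫ - ⟪v, x⟫ ≤ (M * (2 * M)) / lam := by
    intro lam hlam
    obtain ⟨hpC, hineq⟩ := hp lam hlam
    have h1 : ⟪v, x⟫ ≤ ⟪p lam, x⟫ := hv _ hpC
    constructor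
    · linarith
    · have h2 := hineq v hvC
      have expand : ⟪(-(lam • x)) - p lam, v - p lam⟫
          = -(lam * (⟪v, x⟫ - ⟪p lam, x⟫)) - ⟪p lam, v - p lam⟫ := by
        rw [inner_sub_left, inner_neg_left, real_inner_smul_left]
        have : ⟪x, v - p lam⟫ = ⟪v, x⟫ - ⟪p lam, x⟫ := by
          rw [inner_sub_right, real_inner_comm x v, real_inner_comm x (p lam)]
        rw [this]
      rw [expand] at h2
      have h3 : lam * (⟪p lam, x⟫ - ⟪v, x⟫) ≤ ⟪p lam, v - p lam⟫ := by linarith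
      have h4 : ⟪p lam, v - p lam⟫ ≤ M * (2 * M) := by
        calc ⟪p lam, v - p lam⟫ ≤ ‖p lam‖ * ‖v - p lam‖ := real_inner_le_norm _ _
          _ ≤ M * (2 * M) := by
              have hpn := hMle _ hpC
              have hvn := hMle _ hvC
              have h5 : ‖v - p lam‖ ≤ 2 * M := by
                calc ‖v - p lam‖ ≤ ‖v‖ + ‖p lam‖ := norm_sub_le _ _
                  _ ≤ 2 * M := by linarith
              have hp0 : (0:ℝ) ≤ ‖p lam‖ := norm_nonneg _
              exact mul_le_mul hpn h5 (norm_nonneg _) (hp0.trans hpn)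
      rw [le_div_iff₀ hlam]
      calc (⟪p lam, x⟫ - ⟪v, x⟫) * lam = lam * (⟪p lam, x⟫ - ⟪v, x⟫) := by ring
        _ ≤ ⟪p lam, v - p lam⟫ := h3
        _ ≤ M * (2 * M) := h4
  have hub : Filter.Tendsto (fun lam : ℝ => (M * (2 * M)) / lam) Filter.atTop (nhds 0) :=
    tendsto_const_nhds.div_atTop Filter.tendsto_id
  refine tendsto_of_tendsto_of_tendsto_of_le_of_le' tendsto_const_nhds hub ?_ ?_
  · filter_upwards [Filter.eventually_gt_atTop 0] with lam hlam
    exact (key lam hlam).1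
  · filter_upwards [Filter.eventually_gt_atTop 0] with lam hlam
    exact (key lam hlam).2
end

section
/- Let C be a nonempty compact convex polyhedral set in ℝⁿ and x ∈ ℝⁿ. Let S = Argmin_{c∈C} ⟨c, x⟩ and let z₀ be the minimal-norm element of S (i.e., z₀ = proj_S(0)). Then there exists λ* ≥ 0 such that z₀ is the unique minimizer over {z : Az ≤ b} of z ↦ ½‖z‖² + λ*(⟨x, z⟩ - ν), where ν = min_{c∈C} ⟨c, x⟩, and consequently z₀ = proj_C(-λ* x). -/
/-!
The minimal-norm point `z₀` of the face `S = C ∩ {z | ⟪x, z⟫ ≤ ν}` satisfies the variational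
inequality `⟪-z₀, z - z₀⟫ ≤ 0` on `S`. Since `S` is itself a polyhedron, Farkas' lemma shows that
its normal cone at `z₀` is generated by the normals of the active constraints, so
`-z₀ = λ x + u` with `λ ≥ 0` and `u` in the normal cone of `C` at `z₀`. This says
`z₀ = proj_C (-λ x)`, i.e. `z₀` is the unique minimizer of `½‖z‖² + λ⟪x, z⟫` on `C`.

Farkas' lemma needs the cone spanned by finitely many vectors to be closed: by Carathéodory's
theorem for cones it is a finite union of cones over linearly independent families, each the image
of an orthant under a closed embedding.
-/

open RealInnerProductSpace

namespace PointedCone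

section Caratheodory

variable {E : Type*} [AddCommGroup E] [Module ℝ E]

lemma mem_hull_finset_iff {s : Finset E} {x : E} :
    x ∈ hull ℝ (s : Set E) ↔ ∃ c : E → ℝ, (∀ v ∈ s, 0 ≤ c v) ∧ ∑ v ∈ s, c v • v = x := by
  constructor
  · intro hx
    obtain ⟨f, -, rfl⟩ := Submodule.mem_span_finset.mp hx
    exact ⟨fun v => f v, fun v _ => (f v).2, by simp only [Nonneg.coe_smul]⟩
  · rintro ⟨c, hc, rfl⟩
    refine Submodule.sum_mem _ fun v hv => ?_
    simpa using Submodule.smul_mem _ ⟨c v, hc v hv⟩ (subset_hull (R := ℝ) (Finset.mem_coe.mpr hv))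

lemma exists_pos_relation_of_not_linearIndepOn {s : Finset E}
    (hs : ¬LinearIndepOn ℝ id (s : Set E)) :
    ∃ g : E → ℝ, ∑ v ∈ s, g v • v = 0 ∧ ∃ w ∈ s, 0 < g w := by
  obtain ⟨g, hg, w, hws, hgw⟩ := not_linearIndepOn_finset_iff.mp hs
  rcases hgw.lt_or_gt with hneg | hpos
  · refine ⟨-g, ?_, w, hws, neg_pos.mpr hneg⟩
    simpa only [Pi.neg_apply, neg_smul, Finset.sum_neg_distrib, neg_eq_zero, id] using hg
  · exact ⟨g, hg, w, hws, hpos⟩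

lemma exists_mem_hull_erase [DecidableEq E] {s : Finset E}
    (hs : ¬LinearIndepOn ℝ id (s : Set E)) {x : E} (hx : x ∈ hull ℝ (s : Set E)) :
    ∃ v₀ ∈ s, x ∈ hull ℝ (s.erase v₀ : Set E) := by
  obtain ⟨c, hc, rfl⟩ := mem_hull_finset_iff.mp hx
  obtain ⟨g, hg, w, hws, hgw⟩ := exists_pos_relation_of_not_linearIndepOn hs
  obtain ⟨v₀, hv₀, hmin⟩ := (s.filter (0 < g ·)).exists_min_image (fun v => c v / g v)
    ⟨w, Finset.mem_filter.mpr ⟨hws, hgw⟩⟩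
  obtain ⟨hv₀s, hgv₀⟩ := Finset.mem_filter.mp hv₀
  -- `τ` is the largest multiple of the relation `g` that can be subtracted from `c` while
  -- keeping the coefficients nonnegative; it kills the coefficient of `v₀`.
  set τ := c v₀ / g v₀
  have hτ : 0 ≤ τ := div_nonneg (hc v₀ hv₀s) hgv₀.le
  have hcv₀ : c v₀ - τ * g v₀ = 0 := by simp [τ, hgv₀.ne']
  refine ⟨v₀, hv₀s, mem_hull_finset_iff.mpr ⟨fun v => c v - τ * g v, fun v hv => ?_, ?_⟩⟩
  · have hvs := Finset.mem_of_mem_erase hv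
    rcases lt_or_ge 0 (g v) with hgv | hgv
    · have := hmin v (Finset.mem_filter.mpr ⟨hvs, hgv⟩)
      rw [le_div_iff₀ hgv] at this
      linarith
    · nlinarith [hc v hvs]
  · rw [Finset.sum_erase _ (by simp only [hcv₀, zero_smul])]
    simp only [sub_smul, mul_smul, Finset.sum_sub_distrib, ← Finset.smul_sum, hg, smul_zero,
      sub_zero]

theorem exists_linearIndepOn_of_mem_hull {s : Finset E} {x : E} (hx : x ∈ hull ℝ (s : Set E)) :
    ∃ t ⊆ s, LinearIndepOn ℝ id (t : Set E) ∧ x ∈ hull ℝ (t : Set E) := by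
  classical
  induction s using Finset.strongInduction with
  | H s ih =>
    by_cases hs : LinearIndepOn ℝ id (s : Set E)
    · exact ⟨s, subset_rfl, hs, hx⟩
    obtain ⟨v₀, hv₀, hx'⟩ := exists_mem_hull_erase hs hx
    obtain ⟨t, hts, ht, hxt⟩ := ih _ (Finset.erase_ssubset hv₀) hx'
    exact ⟨t, hts.trans (Finset.erase_subset _ _), ht, hxt⟩

end Caratheodory

section Closed

variable {E : Type*} [NormedAddCommGroup E] [NormedSpace ℝ E]

lemma isClosed_hull_of_linearIndepOn {t : Finset E} (ht : LinearIndepOn ℝ id (t : Set E)) :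
    IsClosed (hull ℝ (t : Set E) : Set E) := by
  let f := Fintype.linearCombination ℝ (fun v : (t : Set E) => (v : E))
  have hf : Topology.IsClosedEmbedding f :=
    LinearMap.isClosedEmbedding_of_injective
      (LinearMap.ker_eq_bot.mpr ht.fintypeLinearCombination_injective)
  have himage : (hull ℝ (t : Set E) : Set E) = f '' Set.Ici 0 := by
    ext x
    simp only [SetLike.mem_coe, Submodule.mem_span_iff_of_fintype, Set.mem_image, Set.mem_Ici,
      f, Fintype.linearCombination_apply]
    constructor
    · rintro ⟨c, rfl⟩
      exact ⟨fun v => c v, fun v => (c v).2, by simp only [Nonneg.coe_smul]⟩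
    · rintro ⟨c, hc, rfl⟩
      exact ⟨fun v => ⟨c v, hc v⟩, by simp only [Nonneg.mk_smul]⟩
  rw [himage]
  exact hf.isClosedMap _ isClosed_Ici

theorem isClosed_hull_finset (s : Finset E) : IsClosed (hull ℝ (s : Set E) : Set E) := by
  classical
  have hunion : (hull ℝ (s : Set E) : Set E) =
      ⋃ t ∈ s.powerset.filter (fun t : Finset E => LinearIndepOn ℝ id (t : Set E)),
        (hull ℝ ((t : Finset E) : Set E) : Set E) := by
    refine subset_antisymm (fun x hx => ?_) (Set.iUnion₂_subset fun t ht => ?_)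
    · obtain ⟨t, hts, ht, hxt⟩ := exists_linearIndepOn_of_mem_hull hx
      exact Set.mem_biUnion (Finset.mem_filter.mpr ⟨Finset.mem_powerset.mpr hts, ht⟩) hxt
    · exact Submodule.span_mono (Finset.coe_subset.mpr
        (Finset.mem_powerset.mp (Finset.mem_filter.mp ht).1))
  rw [hunion]
  exact isClosed_biUnion_finset fun t ht =>
    isClosed_hull_of_linearIndepOn (Finset.mem_filter.mp ht).2

end Closed

section Farkas

variable {E : Type*} [NormedAddCommGroup E] [InnerProductSpace ℝ E] [CompleteSpace E]

theorem mem_hull_iff_forall_inner_nonneg {s : Set E} (hs : s.Finite) {y : E} :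
    y ∈ hull ℝ s ↔ ∀ d, (∀ v ∈ s, 0 ≤ ⟪v, d⟫) → 0 ≤ ⟪y, d⟫ := by
  refine ⟨fun hy d hd => ?_, fun h => ?_⟩
  · have hle : hull ℝ s ≤ (ProperCone.innerDual {d} : PointedCone ℝ E) :=
      Submodule.span_le.mpr fun v hv => by simpa [real_inner_comm] using hd v hv
    simpa [real_inner_comm] using hle hy
  lift s to Finset E using hs
  let K : ProperCone ℝ E := ⟨hull ℝ (s : Set E), isClosed_hull_finset s⟩
  suffices hy : y ∈ ProperCone.innerDual (ProperCone.innerDual (K : Set E)) by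
    rwa [ProperCone.innerDual_innerDual] at hy
  intro d hd
  simpa [real_inner_comm] using h d fun v hv => hd (subset_hull hv)

end Farkas

end PointedCone

section Polyhedron

open Filter Topology PointedCone

variable {E ι : Type*} [NormedAddCommGroup E] [InnerProductSpace ℝ E]

def polyhedron (a : ι → E) (β : ι → ℝ) : Set E := {z | ∀ i, ⟪a i, z⟫ ≤ β i}

variable {a : ι → E} {β : ι → ℝ} {z₀ : E}

lemma convex_polyhedron : Convex ℝ (polyhedron a β) := by
  simp only [polyhedron, Set.ofPred_forall]
  exact convex_iInter fun i => convex_halfSpace_le (innerₗ E (a i)).isLinear (β i)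

lemma polyhedron_option_elim (x : E) (ν : ℝ) :
    polyhedron (fun o : Option ι => o.elim x a) (fun o => o.elim ν β) =
      polyhedron a β ∩ {z | ⟪x, z⟫ ≤ ν} := by
  ext z
  simp [polyhedron, Option.forall, and_comm]

lemma eventually_add_smul_mem_polyhedron [Finite ι] (hz₀ : z₀ ∈ polyhedron a β) {d : E}
    (hd : ∀ i, ⟪a i, z₀⟫ = β i → ⟪a i, d⟫ ≤ 0) :
    ∀ᶠ t in 𝓝[>] (0 : ℝ), z₀ + t • d ∈ polyhedron a β := by
  simp only [polyhedron, Set.mem_ofPred_eq, eventually_all]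
  intro i
  have hexp (t : ℝ) : ⟪a i, z₀ + t • d⟫ = ⟪a i, z₀⟫ + t * ⟪a i, d⟫ := by
    rw [inner_add_right, real_inner_smul_right]
  rcases (hz₀ i).eq_or_lt with hact | hlt
  · filter_upwards [self_mem_nhdsWithin] with t (ht : 0 < t)
    nlinarith [hexp t, hd i hact]
  · have hcont : Continuous fun t : ℝ => ⟪a i, z₀ + t • d⟫ := by fun_prop
    have hlt' : ∀ᶠ t in 𝓝 (0 : ℝ), ⟪a i, z₀ + t • d⟫ < β i :=
      hcont.continuousAt.eventually_lt continuousAt_const (by simpa using hlt)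
    exact (hlt'.filter_mono nhdsWithin_le_nhds).mono fun t ht => ht.le

theorem forall_inner_sub_nonpos_iff_mem_hull [CompleteSpace E] [Finite ι]
    (hz₀ : z₀ ∈ polyhedron a β) {v : E} :
    (∀ z ∈ polyhedron a β, ⟪v, z - z₀⟫ ≤ 0) ↔ v ∈ hull ℝ (a '' {i | ⟪a i, z₀⟫ = β i}) := by
  rw [mem_hull_iff_forall_inner_nonneg ((Set.toFinite _).image a)]
  simp only [Set.forall_mem_image, Set.mem_ofPred_eq]
  constructor
  · intro hv d hd
    have hfeas : ∀ᶠ t in 𝓝[>] (0 : ℝ), z₀ + t • -d ∈ polyhedron a β :=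
      eventually_add_smul_mem_polyhedron hz₀ fun i hi => by
        simpa only [inner_neg_right, neg_nonpos] using hd hi
    obtain ⟨t, htP, ht⟩ := (hfeas.and self_mem_nhdsWithin).exists
    have := hv _ htP
    rw [add_sub_cancel_left, inner_smul_right, inner_neg_right] at this
    nlinarith
  · intro hv z hz
    have := hv (z₀ - z) fun i hi => by rw [inner_sub_right, hi]; linarith [hz i]
    rw [← neg_sub, inner_neg_right]
    linarith

theorem exists_nonneg_forall_inner_sub_smul_sub_nonpos [CompleteSpace E] [Finite ι]
    (hz₀ : z₀ ∈ polyhedron a β) {x : E} {ν : ℝ} (hx : ⟪x, z₀⟫ = ν) {v : E}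
    (hv : ∀ z ∈ polyhedron a β ∩ {z | ⟪x, z⟫ ≤ ν}, ⟪v, z - z₀⟫ ≤ 0) :
    ∃ lam : ℝ, 0 ≤ lam ∧ ∀ z ∈ polyhedron a β, ⟪v - lam • x, z - z₀⟫ ≤ 0 := by
  -- The cut `⟪x, z⟫ ≤ ν` becomes the constraint indexed by `none`.
  rw [← polyhedron_option_elim] at hv
  have hz₀' : z₀ ∈ polyhedron (fun o : Option ι => o.elim x a) (fun o => o.elim ν β) := by
    rw [polyhedron_option_elim]
    exact ⟨hz₀, hx.le⟩
  have hsub : (fun o : Option ι => o.elim x a) '' {o | ⟪o.elim x a, z₀⟫ = o.elim ν β} ⊆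
      insert x (a '' {i | ⟪a i, z₀⟫ = β i}) := by
    rintro _ ⟨_ | i, hi, rfl⟩
    exacts [Set.mem_insert _ _, Set.mem_insert_of_mem _ ⟨i, hi, rfl⟩]
  obtain ⟨lam, u, hu, hvu⟩ := Submodule.mem_span_insert.mp
    (Submodule.span_mono hsub ((forall_inner_sub_nonpos_iff_mem_hull hz₀').mp hv))
  rw [← Nonneg.coe_smul] at hvu
  refine ⟨lam, lam.2, ?_⟩
  rw [hvu, add_sub_cancel_left]
  exact (forall_inner_sub_nonpos_iff_mem_hull hz₀).mpr hu

end Polyhedron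

section Projection

variable {E : Type*} [NormedAddCommGroup E] [InnerProductSpace ℝ E]

lemma inner_neg_sub_nonpos_of_forall_norm_le {K : Set E} (hK : Convex ℝ K) {z₀ : E}
    (hz₀ : z₀ ∈ K) (hmin : ∀ z ∈ K, ‖z₀‖ ≤ ‖z‖) : ∀ z ∈ K, ⟪-z₀, z - z₀⟫ ≤ 0 := by
  have : Nonempty ↥K := ⟨⟨z₀, hz₀⟩⟩
  have hinf : ‖0 - z₀‖ = ⨅ w : K, ‖0 - (w : E)‖ :=
    le_antisymm (le_ciInf fun w => by simpa using hmin w w.2)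
      (ciInf_le ⟨0, Set.forall_mem_range.2 fun _ => norm_nonneg _⟩ (⟨z₀, hz₀⟩ : K))
  simpa using (norm_eq_iInf_iff_real_inner_le_zero hK hz₀).mp hinf

lemma half_sq_norm_sub_inner_lt {u z₀ z : E} (h : ⟪u - z₀, z - z₀⟫ ≤ 0) (hz : z ≠ z₀) :
    1 / 2 * ‖z₀‖ ^ 2 - ⟪u, z₀⟫ < 1 / 2 * ‖z‖ ^ 2 - ⟪u, z⟫ := by
  have hexpand : ‖z‖ ^ 2 = ‖z₀‖ ^ 2 + 2 * ⟪z₀, z - z₀⟫ + ‖z - z₀‖ ^ 2 := by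
    simpa using norm_add_sq_real z₀ (z - z₀)
  have hpos : 0 < ‖z - z₀‖ ^ 2 := by positivity [sub_ne_zero.mpr hz]
  rw [inner_sub_left] at h
  have : ⟪u, z⟫ - ⟪u, z₀⟫ = ⟪u, z - z₀⟫ := (inner_sub_right _ _ _).symm
  linarith

lemma sep_forall_inner_le_eq_inter {C : Set E} {x z₀ : E} (hz₀ : z₀ ∈ C)
    (hmin : ∀ c ∈ C, ⟪z₀, x⟫ ≤ ⟪c, x⟫) :
    {c ∈ C | ∀ c' ∈ C, ⟪c, x⟫ ≤ ⟪c', x⟫} = C ∩ {z | ⟪x, z⟫ ≤ ⟪z₀, x⟫} := by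
  ext z
  simp only [Set.mem_inter_iff, Set.mem_ofPred_eq, real_inner_comm x z]
  exact ⟨fun ⟨hz, hzmin⟩ => ⟨hz, hzmin z₀ hz₀⟩,
    fun ⟨hz, hle⟩ => ⟨hz, fun c hc => hle.trans (hmin c hc)⟩⟩

end Projection

theorem exact_penalization_min_norm_general
    {n m : ℕ} (A : Matrix (Fin m) (Fin n) ℝ) (b : Fin m → ℝ)
    (C : Set (EuclideanSpace ℝ (Fin n)))
    (hCdef : C = {z : EuclideanSpace ℝ (Fin n) | ∀ i, A.mulVec z i ≤ b i})
    (x : EuclideanSpace ℝ (Fin n))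
    (S : Set (EuclideanSpace ℝ (Fin n)))
    (hS : S = {c ∈ C | ∀ c' ∈ C, ⟪c, x⟫ ≤ ⟪c', x⟫})
    (z₀ : EuclideanSpace ℝ (Fin n)) (hz₀S : z₀ ∈ S)
    (hz₀min : ∀ z ∈ S, ‖z₀‖ ≤ ‖z‖)
    (ν : ℝ) (hν : ν = ⟪z₀, x⟫) :
    ∃ lam : ℝ, 0 ≤ lam ∧
      (∀ z ∈ C, z ≠ z₀ →
        (1 / 2) * ‖z₀‖ ^ 2 + lam * (⟪x, z₀⟫ - ν)
          < (1 / 2) * ‖z‖ ^ 2 + lam * (⟪x, z⟫ - ν)) ∧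
      (∀ c ∈ C, ⟪(-(lam • x)) - z₀, c - z₀⟫ ≤ 0) := by
  let row (i : Fin m) : EuclideanSpace ℝ (Fin n) := WithLp.toLp 2 (A i)
  have hC : C = polyhedron row b := by
    rw [hCdef]
    ext z
    simp [polyhedron, row, Matrix.mulVec, dotProduct, PiLp.inner_apply, mul_comm]
  obtain ⟨hz₀C, hz₀opt⟩ : z₀ ∈ C ∧ ∀ c ∈ C, ⟪z₀, x⟫ ≤ ⟪c, x⟫ := by rwa [hS] at hz₀S
  rw [hS, sep_forall_inner_le_eq_inter hz₀C hz₀opt, ← hν, hC] at hz₀S hz₀min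
  rw [hC] at hz₀C ⊢
  have hconvex : Convex ℝ (polyhedron row b ∩ {z | ⟪x, z⟫ ≤ ν}) :=
    convex_polyhedron.inter (convex_halfSpace_le (innerₗ _ x).isLinear ν)
  obtain ⟨lam, hlam, hproj⟩ := exists_nonneg_forall_inner_sub_smul_sub_nonpos hz₀C
    (by rw [hν, real_inner_comm]) (inner_neg_sub_nonpos_of_forall_norm_le hconvex hz₀S hz₀min)
  have hproj' : ∀ c ∈ polyhedron row b, ⟪-(lam • x) - z₀, c - z₀⟫ ≤ 0 := by
    simpa only [neg_sub_comm] using hproj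
  refine ⟨lam, hlam, fun z hz hne => ?_, hproj'⟩
  have := half_sq_norm_sub_inner_lt (hproj' z hz) hne
  simp only [inner_neg_left, real_inner_smul_left] at this
  linarith

theorem exact_penalization_min_norm
    {n m : ℕ} (A : Matrix (Fin m) (Fin n) ℝ) (b : Fin m → ℝ)
    (C : Set (EuclideanSpace ℝ (Fin n)))
    (hCdef : C = {z : EuclideanSpace ℝ (Fin n) | ∀ i, A.mulVec z i ≤ b i})
    (hC : C.Nonempty) (hCcomp : IsCompact C)
    (x : EuclideanSpace ℝ (Fin n))
    (S : Set (EuclideanSpace ℝ (Fin n)))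
    (hS : S = {c ∈ C | ∀ c' ∈ C, ⟪c, x⟫ ≤ ⟪c', x⟫})
    (z₀ : EuclideanSpace ℝ (Fin n)) (hz₀S : z₀ ∈ S)
    (hz₀min : ∀ z ∈ S, ‖z₀‖ ≤ ‖z‖)
    (ν : ℝ) (hν : ν = ⟪z₀, x⟫) :
    ∃ lam : ℝ, 0 ≤ lam ∧
      (∀ z ∈ C, z ≠ z₀ →
        (1 / 2) * ‖z₀‖ ^ 2 + lam * (⟪x, z₀⟫ - ν)
          < (1 / 2) * ‖z‖ ^ 2 + lam * (⟪x, z⟫ - ν)) ∧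
      (∀ c ∈ C, ⟪(-(lam • x)) - z₀, c - z₀⟫ ≤ 0) :=
  exact_penalization_min_norm_general A b C hCdef x S hS z₀ hz₀S hz₀min ν hν
end

section
/- Let C be a nonempty compact convex subset of a real Hilbert space H and let x ∈ H. Define the gap function g(λ) = ⟨proj_C(-λx), x⟩ - min_{c∈C} ⟨c, x⟩ for λ > 0. Then g(λ) ≥ 0 for all λ > 0, and g(λ) ≤ μ_C²/λ where μ_C = sup_{c∈C} ‖c‖; in particular g(λ) = O(1/λ). -/
open RealInnerProductSpace

theorem gap_function_big_O
    {H : Type*} [NormedAddCommGroup H] [InnerProductSpace ℝ H]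
    (C : Set H) (hC : C.Nonempty) (hCcomp : IsCompact C) (hCconv : Convex ℝ C)
    (x : H)
    (μ : ℝ) (hμ : μ = sSup ((fun c => ‖c‖) '' C))
    (p : ℝ → H)
    (hp : ∀ lam : ℝ, 0 < lam → p lam ∈ C ∧
      ∀ c ∈ C, ⟪(-(lam • x)) - p lam, c - p lam⟫ ≤ 0)
    (v : H) (hvC : v ∈ C) (hv : ∀ c ∈ C, ⟪v, x⟫ ≤ ⟪c, x⟫) :
    ∀ lam : ℝ, 0 < lam →
      0 ≤ ⟪p lam, x⟫ - ⟪v, x⟫ ∧ ⟪p lam, x⟫ - ⟪v, x⟫ ≤ μ ^ 2 / lam := by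
  intro lam hlam
  obtain ⟨hpC, hvar⟩ := hp lam hlam
  have hbdd : BddAbove ((fun c => ‖c‖) '' C) :=
    (hCcomp.image continuous_norm).bddAbove
  have hpμ : ‖p lam‖ ≤ μ := hμ ▸ le_csSup hbdd ⟨_, hpC, rfl⟩
  have hvμ : ‖v‖ ≤ μ := hμ ▸ le_csSup hbdd ⟨_, hvC, rfl⟩
  have h0 : 0 ≤ ⟪p lam, x⟫ - ⟪v, x⟫ := sub_nonneg.mpr (hv _ hpC)
  refine ⟨h0, ?_⟩
  have key := hvar v hvC
  simp only [inner_sub_left, inner_sub_right, inner_neg_left,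
    real_inner_smul_left, real_inner_comm v x, real_inner_comm (p lam) x] at key
  have hmain : lam * (⟪p lam, x⟫ - ⟪v, x⟫) ≤ ⟪p lam, v⟫ - ⟪p lam, p lam⟫ := by
    nlinarith [key]
  have hpv : ⟪p lam, v⟫ ≤ ‖p lam‖ * ‖v‖ := real_inner_le_norm _ _
  have hpp : (0:ℝ) ≤ ⟪p lam, p lam⟫ := real_inner_self_nonneg
  have hnn : (0:ℝ) ≤ ‖p lam‖ := norm_nonneg _
  have hnv : (0:ℝ) ≤ ‖v‖ := norm_nonneg _
  have : lam * (⟪p lam, x⟫ - ⟪v, x⟫) ≤ μ ^ 2 := by nlinarith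
  rw [le_div_iff₀ hlam]
  linarith [this]
end
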